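/- Let D be a triangulated category. (1) A bounded t-structure on D is determined by its heart: two bounded t-structures with the same heart coincide. (2) A full additive subcategory A ⊆ D is the heart of a bounded t-structure on D if and only if both of the following hold: (a) if A and B are objects of A then Hom_D(A, B[k]) = 0 for all k < 0; (b) for every nonzero object E ∈ D there are integers m < n and a collection of distinguished triangles E_{i-1} → E_i → A_i → E_{i-1}[1] for m < i ≤ n, with E_m = 0, E_n = E, and A_i[i] ∈ A for all i. -/

import Mathlib

/-!
For a bounded t-structure, truncating at every degree filters each object by a finite tower of
distinguished triangles whose factors are shifted heart objects; conversely, since `D^{≤n}` is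
closed under extensions, it consists exactly of the objects admitting such a tower with factors
in degrees `≤ n`. Hence the heart determines `D^{≤n}`, and `D^{≥n} = (D^{≤n-1})^⊥`.

Given `𝒜` with (a) and (b), take `D^{≤n}` to be the objects with a tower of `𝒜`-factors in
degrees `≤ n` and `D^{≥n} = (D^{≤n-1})^⊥`; by (a), towers in degrees `≤ n` admit only zero maps
to towers in degrees `> n`. Truncation triangles are built by induction on the tower of `E`: if
its top factor has degree `> n`, the truncation of `E` is that of the previous stage `E'`,
composed with `E' → E`.
-/

open CategoryTheory CategoryTheory.Limits CategoryTheory.Pretriangulated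
open CategoryTheory.Triangulated
open ZeroObject

universe v u

variable (C : Type u) [Category.{v} C] [HasZeroObject C] [HasShift C ℤ]
  [Preadditive C] [∀ n : ℤ, (CategoryTheory.shiftFunctor C n).Additive] [Pretriangulated C]

/-- A t-structure `(D^{≤0}, D^{≥0})` is bounded if every object lies in
`D^{≤n} ∩ D^{≥m}` for some integers `m ≤ n`. -/
def TStructureIsBounded (t : TStructure C) : Prop :=
  ∀ X : C, ∃ m n : ℤ, t.le n X ∧ t.ge m X

/-- The heart `D^{≤0} ∩ D^{≥0}` of a t-structure, as a predicate on objects. -/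
def heartP (t : TStructure C) : C → Prop := fun X => t.le 0 X ∧ t.ge 0 X

/-- Condition (b) of Lemma 3.2: `E` admits a finite tower of distinguished triangles
`E_{i-1} → E_i → A_i → E_{i-1}[1]` (for `m < i ≤ n`, reindexed by `j = i - m - 1 < k = n - m`)
with `E_m = 0`, `E_n = E` and `A_i[i] ∈ 𝒜` for all `i`. -/
def HasHeartFiltration (𝒜 : C → Prop) (E : C) : Prop :=
  ∃ (m : ℤ) (k : ℕ), 0 < k ∧ ∃ (obj : Fin (k + 1) → C) (fac : Fin k → C),
    IsZero (obj 0) ∧ obj (Fin.last k) = E ∧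
    (∀ j : Fin k, ∃ (f : obj j.castSucc ⟶ obj j.succ) (g : obj j.succ ⟶ fac j)
      (h : fac j ⟶ (obj j.castSucc)⟦(1 : ℤ)⟧), Triangle.mk f g h ∈ distTriang C) ∧
    (∀ j : Fin k, 𝒜 ((fac j)⟦(m + (j : ℕ) + 1 : ℤ)⟧))

section

variable {C}

/-- In a triangulated category `Z₁₃` is an extension of `Z₁₂` by `Z₂₃` (octahedral axiom); the
orthogonality survives in any pretriangulated category by a diagram chase. -/
lemma rightOrthogonal_obj₃_of_comp {P : ObjectProperty C} {X₁ X₂ X₃ Z₁₂ Z₂₃ Z₁₃ : C}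
    {u₁₂ : X₁ ⟶ X₂} {v₁₂ : X₂ ⟶ Z₁₂} {w₁₂ : Z₁₂ ⟶ X₁⟦(1 : ℤ)⟧}
    {u₂₃ : X₂ ⟶ X₃} {v₂₃ : X₃ ⟶ Z₂₃} {w₂₃ : Z₂₃ ⟶ X₂⟦(1 : ℤ)⟧}
    {v₁₃ : X₃ ⟶ Z₁₃} {w₁₃ : Z₁₃ ⟶ X₁⟦(1 : ℤ)⟧}
    (h₁₂ : Triangle.mk u₁₂ v₁₂ w₁₂ ∈ distTriang C) (h₂₃ : Triangle.mk u₂₃ v₂₃ w₂₃ ∈ distTriang C)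
    (h₁₃ : Triangle.mk (u₁₂ ≫ u₂₃) v₁₃ w₁₃ ∈ distTriang C)
    (hZ₁₂ : P.rightOrthogonal Z₁₂) (hZ₂₃ : P.rightOrthogonal Z₂₃) :
    P.rightOrthogonal Z₁₃ := by
  intro U f hU
  have hfw : f ≫ w₁₃ = 0 := by
    have hfwu : f ≫ w₁₃ ≫ u₁₂⟦(1 : ℤ)⟧' = 0 := by
      obtain ⟨e, he⟩ := Triangle.coyoneda_exact₃ _ (rot_of_distTriang _ h₂₃)
        (f ≫ w₁₃ ≫ u₁₂⟦(1 : ℤ)⟧') (by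
          change (f ≫ w₁₃ ≫ u₁₂⟦(1 : ℤ)⟧') ≫ (-u₂₃⟦(1 : ℤ)⟧') = 0
          have h₃₁ : w₁₃ ≫ (u₁₂ ≫ u₂₃)⟦(1 : ℤ)⟧' = 0 := comp_distTriang_mor_zero₃₁ _ h₁₃
          rw [Preadditive.comp_neg, Category.assoc, Category.assoc, ← Functor.map_comp, h₃₁,
            comp_zero, neg_zero])
      exact he.trans (by rw [hZ₂₃ e hU]; exact zero_comp)
    obtain ⟨e, he⟩ := Triangle.coyoneda_exact₃ _ (rot_of_distTriang _ h₁₂) (f ≫ w₁₃) (by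
      change (f ≫ w₁₃) ≫ (-u₁₂⟦(1 : ℤ)⟧') = 0
      rw [Preadditive.comp_neg, Category.assoc, hfwu, neg_zero])
    exact he.trans (by rw [hZ₁₂ e hU]; exact zero_comp)
  obtain ⟨g, hg⟩ := Triangle.coyoneda_exact₃ _ h₁₃ f hfw
  obtain ⟨g', hg'⟩ := Triangle.coyoneda_exact₂ _ h₂₃ g (hZ₂₃ _ hU)
  obtain ⟨r, hr⟩ := Triangle.yoneda_exact₂ _ h₁₂ (u₂₃ ≫ v₁₃)
    ((Category.assoc _ _ _).symm.trans (comp_distTriang_mor_zero₁₂ _ h₁₃))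
  have hf : f = (g' ≫ v₁₂) ≫ r := by
    rw [hg, hg']
    exact (Category.assoc _ _ _).trans ((congrArg (g' ≫ ·) hr).trans (Category.assoc _ _ _).symm)
  rw [hf, hZ₁₂ (g' ≫ v₁₂) hU]
  exact zero_comp

/-- `HasFiltration 𝒜 a b E`: a tower `0 = E_a → E_{a+1} → ⋯ → E_b = E` of distinguished triangles
`E_{i-1} → E_i → A_i → E_{i-1}⟦1⟧` with `A_i⟦i⟧ ∈ 𝒜`. -/
inductive HasFiltration (𝒜 : ObjectProperty C) (a : ℤ) : ℤ → C → Prop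
  | zero {E : C} (hE : IsZero E) : HasFiltration 𝒜 a a E
  | ext {b : ℤ} {T : Triangle C} (h₁ : HasFiltration 𝒜 a b T.obj₁) (hT : T ∈ distTriang C)
      (h₃ : 𝒜 (T.obj₃⟦b + 1⟧)) : HasFiltration 𝒜 a (b + 1) T.obj₂

def FiltrationLE (𝒜 : ObjectProperty C) (n : ℤ) : ObjectProperty C :=
  fun E => ∃ a b, b ≤ n ∧ HasFiltration 𝒜 a b E

def NoNegativeExt (𝒜 : ObjectProperty C) : Prop :=
  ∀ A B : C, 𝒜 A → 𝒜 B → ∀ k : ℤ, k < 0 → ∀ f : A ⟶ B⟦k⟧, f = 0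

variable {𝒜 : ObjectProperty C}

namespace HasFiltration

lemma le {a b : ℤ} {E : C} (hE : HasFiltration 𝒜 a b E) : a ≤ b := by
  induction hE with
  | zero => rfl
  | ext _ _ _ ih => omega

lemma single {F : C} {b : ℤ} (hF : 𝒜 (F⟦b + 1⟧)) : HasFiltration 𝒜 b (b + 1) F :=
  ext (T := Triangle.mk (0 : 0 ⟶ F) (𝟙 F) 0) (zero (isZero_zero C))
    (contractible_distinguished₁ F) hF

lemma of_iso {a b : ℤ} {E E' : C} (hE : HasFiltration 𝒜 a b E) (e : E ≅ E') :
    HasFiltration 𝒜 a b E' := by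
  cases hE with
  | zero hE => exact zero (hE.of_iso e.symm)
  | @ext b T h₁ hT h₃ =>
    exact ext (T := Triangle.mk (T.mor₁ ≫ e.hom) (e.inv ≫ T.mor₂) T.mor₃) h₁
      (isomorphic_distinguished _ hT _ <| Triangle.isoMk _ _ (Iso.refl _) e.symm (Iso.refl _)
        (by dsimp [Triangle.mk]; simp) (by dsimp [Triangle.mk]; simp)
        (by dsimp [Triangle.mk]; simp)) h₃

lemma shift [𝒜.IsClosedUnderIsomorphisms] {a b : ℤ} {E : C} (hE : HasFiltration 𝒜 a b E)
    (s : ℤ) : HasFiltration 𝒜 (a - s) (b - s) (E⟦s⟧) := by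
  induction hE with
  | zero hE => exact zero ((shiftFunctor C s).map_isZero hE)
  | @ext b T _ hT h₃ ih =>
    rw [show b + 1 - s = b - s + 1 by ring]
    exact ext (T := (Triangle.shiftFunctor C s).obj T) ih (Triangle.shift_distinguished _ hT s)
      (𝒜.prop_of_iso ((shiftFunctorAdd' C s (b - s + 1) (b + 1) (by ring)).app T.obj₃) h₃)

lemma prop_of_extensionClosed {P : ObjectProperty C} (hzero : ∀ X, IsZero X → P X)
    (hext : ∀ T ∈ distTriang C, P T.obj₁ → P T.obj₃ → P T.obj₂) {a b : ℤ} {E : C}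
    (hE : HasFiltration 𝒜 a b E) (hfac : ∀ (F : C) (d : ℤ), a < d → d ≤ b → 𝒜 (F⟦d⟧) → P F) :
    P E := by
  induction hE with
  | zero hE => exact hzero _ hE
  | ext h₁ hT h₃ ih =>
    exact hext _ hT (ih fun F d had hdb hF => hfac F d had (by omega) hF)
      (hfac _ _ (by have := h₁.le; omega) le_rfl h₃)

lemma exists_fin_tower {a b : ℤ} {E : C} (hE : HasFiltration 𝒜 a b E) :
    ∃ (k : ℕ) (obj : Fin (k + 1) → C) (fac : Fin k → C), a + k = b ∧
      IsZero (obj 0) ∧ obj (Fin.last k) = E ∧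
      (∀ j : Fin k, ∃ (f : obj j.castSucc ⟶ obj j.succ) (g : obj j.succ ⟶ fac j)
        (h : fac j ⟶ (obj j.castSucc)⟦(1 : ℤ)⟧), Triangle.mk f g h ∈ distTriang C) ∧
      (∀ j : Fin k, 𝒜 ((fac j)⟦(a + (j : ℕ) + 1 : ℤ)⟧)) := by
  induction hE with
  | zero hE =>
    exact ⟨0, fun _ => _, Fin.elim0, by simp, hE, rfl, fun j => j.elim0, fun j => j.elim0⟩
  | @ext b T _ hT h₃ ih =>
    obtain ⟨k, obj, fac, hk, h0, hlast, htri, hfac⟩ := ih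
    refine ⟨k + 1, Fin.snoc (α := fun _ => C) obj T.obj₂, Fin.snoc (α := fun _ => C) fac T.obj₃,
      by omega, ?_, by simp, fun j => ?_, fun j => ?_⟩
    · rwa [← Fin.castSucc_zero, Fin.snoc_castSucc]
    · induction j using Fin.lastCases with
      | last =>
        rw [Fin.snoc_castSucc, Fin.succ_last, Fin.snoc_last, Fin.snoc_last, hlast]
        exact ⟨_, _, _, hT⟩
      | cast i =>
        rw [Fin.snoc_castSucc, Fin.succ_castSucc, Fin.snoc_castSucc, Fin.snoc_castSucc]
        exact htri i
    · induction j using Fin.lastCases with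
      | last => simpa [← hk, add_assoc] using h₃
      | cast i => simpa using hfac i

lemma hasHeartFiltration {a b : ℤ} {E : C} (hE : HasFiltration 𝒜 a b E) (hE0 : ¬ IsZero E) :
    HasHeartFiltration C 𝒜 E := by
  obtain ⟨k, obj, fac, -, h0, hlast, htri, hfac⟩ := hE.exists_fin_tower
  refine ⟨a, k, Nat.pos_of_ne_zero ?_, obj, fac, h0, hlast, htri, hfac⟩
  rintro rfl
  exact hE0 (hlast ▸ h0)

end HasFiltration

lemma HasHeartFiltration.exists_hasFiltration {E : C} (hE : HasHeartFiltration C 𝒜 E) :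
    ∃ a b, HasFiltration 𝒜 a b E := by
  obtain ⟨m, k, -, obj, fac, h0, rfl, htri, hfac⟩ := hE
  suffices ∀ (j : ℕ) (hj : j < k + 1), HasFiltration 𝒜 m (m + j) (obj ⟨j, hj⟩) from
    ⟨m, m + k, this k k.lt_succ_self⟩
  intro j
  induction j with
  | zero => exact fun _ => by rw [Nat.cast_zero, add_zero]; exact .zero h0
  | succ j ih =>
    intro hj
    obtain ⟨f, g, h, hT⟩ := htri ⟨j, by omega⟩
    rw [Nat.cast_succ, ← add_assoc]
    exact .ext (T := Triangle.mk f g h) (ih (by omega)) hT (hfac ⟨j, by omega⟩)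

lemma FiltrationLE.mono {n n' : ℤ} (h : n ≤ n') : FiltrationLE 𝒜 n ≤ FiltrationLE 𝒜 n' :=
  fun _ ⟨a, b, hb, hE⟩ => ⟨a, b, hb.trans h, hE⟩

instance (n : ℤ) : (FiltrationLE 𝒜 n).IsClosedUnderIsomorphisms where
  of_iso e := fun ⟨a, b, hb, hE⟩ => ⟨a, b, hb, hE.of_iso e⟩

omit [HasZeroObject C] [Pretriangulated C] in
lemma NoNegativeExt.hom_eq_zero (h𝒜 : NoNegativeExt 𝒜) {U V : C} {a b : ℤ} (hU : 𝒜 (U⟦a⟧))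
    (hV : 𝒜 (V⟦b⟧)) (hab : a < b) (f : U ⟶ V) : f = 0 := by
  have e := (shiftFunctorAdd' C b (a - b) a (by ring)).app V
  have : f⟦a⟧' ≫ e.hom = 0 := h𝒜 _ _ hU hV (a - b) (by omega) _
  rwa [Preadditive.IsIso.comp_right_eq_zero, Functor.map_eq_zero_iff] at this

lemma leftOrthogonal_shift_of_hasFiltration (h𝒜 : NoNegativeExt 𝒜) {a b d : ℤ} {U : C}
    (hU : HasFiltration 𝒜 a b U) (hd : b < d) : (𝒜.shift d).leftOrthogonal U :=
  hU.prop_of_extensionClosed (fun _ hX _ _ _ => hX.eq_of_src _ _)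
    (fun T hT => ObjectProperty.ext_of_isTriangulatedClosed₂ _ T hT)
    (fun _ _ _ hd' hF _ f hV => h𝒜.hom_eq_zero hF hV (by omega) f)

lemma rightOrthogonal_filtrationLE_of_hasFiltration (h𝒜 : NoNegativeExt 𝒜) {n a b : ℤ} {V : C}
    (hV : HasFiltration 𝒜 a b V) (hn : n ≤ a) : (FiltrationLE 𝒜 n).rightOrthogonal V :=
  hV.prop_of_extensionClosed (fun _ hX _ _ _ => hX.eq_of_tgt _ _)
    (fun T hT => ObjectProperty.ext_of_isTriangulatedClosed₂ _ T hT)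
    (fun _ _ had _ hF _ f ⟨_, _, hb, hU⟩ =>
      leftOrthogonal_shift_of_hasFiltration h𝒜 hU (by omega) f hF)

lemma exists_distTriang_filtrationLE_rightOrthogonal (h𝒜 : NoNegativeExt 𝒜) (n : ℤ)
    {a b : ℤ} {A : C} (hA : HasFiltration 𝒜 a b A) :
    ∃ (X Z : C) (_ : FiltrationLE 𝒜 n X) (_ : (FiltrationLE 𝒜 n).rightOrthogonal Z)
      (f : X ⟶ A) (g : A ⟶ Z) (h : Z ⟶ X⟦(1 : ℤ)⟧), Triangle.mk f g h ∈ distTriang C := by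
  have of_filtrationLE {A : C} (hA : FiltrationLE 𝒜 n A) :
      ∃ (X Z : C) (_ : FiltrationLE 𝒜 n X) (_ : (FiltrationLE 𝒜 n).rightOrthogonal Z)
        (f : X ⟶ A) (g : A ⟶ Z) (h : Z ⟶ X⟦(1 : ℤ)⟧), Triangle.mk f g h ∈ distTriang C :=
    ⟨A, 0, hA, fun _ _ _ => (isZero_zero C).eq_of_tgt _ _, 𝟙 A, 0, 0, contractible_distinguished A⟩
  induction hA with
  | zero hE => exact of_filtrationLE ⟨n, n, le_rfl, .zero hE⟩
  | @ext b T h₁ hT h₃ ih =>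
    by_cases hb : b + 1 ≤ n
    · exact of_filtrationLE ⟨a, b + 1, hb, .ext h₁ hT h₃⟩
    obtain ⟨X, Z, hX, hZ, u, v, w, hT'⟩ := ih
    obtain ⟨Z', v', w', hT''⟩ := distinguished_cocone_triangle (u ≫ T.mor₁)
    exact ⟨X, Z', hX, rightOrthogonal_obj₃_of_comp hT' hT hT'' hZ
      (rightOrthogonal_filtrationLE_of_hasFiltration h𝒜 (.single h₃) (by omega)), _, _, _, hT''⟩

section

variable (𝒜) [𝒜.IsClosedUnderIsomorphisms] (h𝒜 : NoNegativeExt 𝒜)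
  (h𝒜E : ∀ E : C, ∃ a b, HasFiltration 𝒜 a b E)

def tStructureOfNoNegativeExt : TStructure C where
  le := FiltrationLE 𝒜
  ge n := (FiltrationLE 𝒜 (n - 1)).rightOrthogonal
  le_shift n s n' h X := fun ⟨a, b, hb, hX⟩ => ⟨a - s, b - s, by omega, hX.shift s⟩
  ge_shift n s n' h X hX U f := fun ⟨a, b, hb, hU⟩ => by
    have e : X⟦s⟧⟦-s⟧ ≅ X := (shiftFunctorCompIsoId C s (-s) (add_neg_cancel s)).app X
    have : f⟦-s⟧' ≫ e.hom = 0 := hX _ ⟨a + s, b + s, by omega, by simpa using hU.shift (-s)⟩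
    rwa [Preadditive.IsIso.comp_right_eq_zero, Functor.map_eq_zero_iff] at this
  zero' _ _ f hX hY := hY f hX
  le_zero_le := FiltrationLE.mono zero_le_one
  ge_one_le _ hY _ f hU := hY f (FiltrationLE.mono (by omega) _ hU)
  exists_triangle_zero_one A := by
    obtain ⟨a, b, hA⟩ := h𝒜E A
    exact exists_distTriang_filtrationLE_rightOrthogonal h𝒜 0 hA

variable {𝒜}

lemma tStructureIsBounded_tStructureOfNoNegativeExt :
    TStructureIsBounded C (tStructureOfNoNegativeExt 𝒜 h𝒜 h𝒜E) := fun X =>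
  let ⟨a, b, hX⟩ := h𝒜E X
  ⟨a + 1, b, ⟨a, b, le_rfl, hX⟩, rightOrthogonal_filtrationLE_of_hasFiltration h𝒜 hX (by omega)⟩

lemma heartP_tStructureOfNoNegativeExt_iff (h𝒜0 : ∀ X : C, IsZero X → 𝒜 X) (X : C) :
    heartP C (tStructureOfNoNegativeExt 𝒜 h𝒜 h𝒜E) X ↔ 𝒜 X := by
  refine ⟨fun ⟨⟨a, b, hb, hX⟩, hX'⟩ => ?_, fun hX => ?_⟩
  · cases hX with
    | zero hX => exact h𝒜0 X hX
    | @ext b T h₁ hT h₃ =>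
      by_cases hb' : b + 1 ≤ -1
      · exact h𝒜0 _ ((IsZero.iff_id_eq_zero _).2 (hX' _ ⟨a, b + 1, hb', .ext h₁ hT h₃⟩))
      obtain rfl : b = -1 := by omega
      have hT₁ : FiltrationLE 𝒜 (0 - 1) T.obj₁ := ⟨a, -1, le_rfl, h₁⟩
      have hT₁0 : IsZero T.obj₁ := by
        obtain ⟨q, hq⟩ := Triangle.coyoneda_exact₂ _ (inv_rot_of_distTriang _ hT) (𝟙 T.obj₁)
          ((Category.id_comp _).trans (hX' T.mor₁ hT₁))
        have hq0 : q = 0 := rightOrthogonal_filtrationLE_of_hasFiltration h𝒜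
          (HasFiltration.single h₃ |>.shift (-1)) (by norm_num) q hT₁
        rw [IsZero.iff_id_eq_zero, hq, hq0]
        exact zero_comp
      have := (Triangle.isZero₁_iff_isIso₂ _ hT).1 hT₁0
      exact 𝒜.prop_of_iso ((shiftFunctorZero C ℤ).app T.obj₃ ≪≫ (asIso T.mor₂).symm) h₃
  · have h0 : 𝒜 (X⟦(-1 + 1 : ℤ)⟧) := 𝒜.prop_of_iso ((shiftFunctorZero C ℤ).symm.app X) hX
    exact ⟨⟨-1, 0, le_rfl, .single h0⟩,
      rightOrthogonal_filtrationLE_of_hasFiltration h𝒜 (.single h0) le_rfl⟩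

end

lemma noNegativeExt_heartP (t : TStructure C) : NoNegativeExt (heartP C t) :=
  fun _ B hA hB k hk f => t.zero_of_isLE_of_isGE f 0 (-k) (by omega) ⟨hA.1⟩
    ⟨t.ge_shift 0 k (-k) (by omega) B hB.2⟩

lemma hasFiltration_heartP_of_le_of_ge (t : TStructure C) {a b : ℤ} (hab : a ≤ b) {X : C}
    (hle : t.le b X) (hge : t.ge (a + 1) X) : HasFiltration (heartP C t) a b X := by
  induction b, hab using Int.leInduction generalizing X with
  | base =>
    have : t.IsLE X a := ⟨hle⟩
    have : t.IsGE X (a + 1) := ⟨hge⟩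
    exact .zero (t.isZero X a (a + 1))
  | succ n han ih =>
    obtain ⟨X', Y, hX', hY, f, g, h, hT⟩ := t.exists_triangle X n (n + 1) rfl
    have hYle : t.le (n + 1) Y := (t.isLE₂ _ (rot_of_distTriang _ hT) (n + 1) ⟨hle⟩
      ⟨t.le_monotone (by omega) _ (t.le_shift n 1 (n - 1) (by omega) X' hX')⟩).le
    have hX'ge : t.ge (a + 1) X' := (t.isGE₂ _ (inv_rot_of_distTriang _ hT) (a + 1)
      ⟨t.ge_antitone (by omega) _ (t.ge_shift (n + 1) (-1) (n + 2) (by omega) Y hY)⟩ ⟨hge⟩).ge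
    exact .ext (T := Triangle.mk f g h) (ih hX' hX'ge) hT
      ⟨t.le_shift (n + 1) (n + 1) 0 (by omega) Y hYle, t.ge_shift (n + 1) (n + 1) 0 (by omega) Y hY⟩

lemma exists_hasFiltration_heartP_of_le {t : TStructure C} (ht : TStructureIsBounded C t)
    {n : ℤ} {X : C} (hX : t.le n X) : ∃ a, HasFiltration (heartP C t) a n X := by
  obtain ⟨m, -, -, hge⟩ := ht X
  exact ⟨min (m - 1) n, hasFiltration_heartP_of_le_of_ge t (min_le_right _ _) hX
    (t.ge_antitone (by omega) _ hge)⟩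

lemma le_of_hasFiltration_heartP (t : TStructure C) {a b : ℤ} {X : C}
    (hX : HasFiltration (heartP C t) a b X) : t.le b X :=
  hX.prop_of_extensionClosed (fun _ hX => (t.isLE_of_isZero hX b).le)
    (fun T hT h₁ h₃ => (t.isLE₂ T hT b ⟨h₁⟩ ⟨h₃⟩).le)
    fun F d _ hd hF => by
      have : t.IsLE (F⟦d⟧) 0 := ⟨hF.1⟩
      exact t.le_monotone hd _ (t.isLE_of_shift F d d 0).le

lemma TStructure.le_le_of_heartP_eq {t t' : TStructure C} (ht : TStructureIsBounded C t)
    (hh : heartP C t = heartP C t') (n : ℤ) : t.le n ≤ t'.le n := fun _ hX =>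
  let ⟨_, hX⟩ := exists_hasFiltration_heartP_of_le ht hX
  le_of_hasFiltration_heartP t' (hh ▸ hX)

lemma TStructure.ext_of_le_eq {t₁ t₂ : TStructure C} (h : t₁.le = t₂.le) : t₁ = t₂ := by
  have hge : t₁.ge = t₂.ge := by
    funext n X
    apply propext
    simp only [TStructure.ge_iff_isGE, TStructure.isGE_iff_orthogonal _ (n - 1) n (by omega),
      ← TStructure.le_iff_isLE, h]
  cases t₁
  cases t₂
  cases h
  cases hge
  rfl

end

theorem bounded_tStructure_determined_by_heart_and_heart_characterization :
    (∀ t₁ t₂ : TStructure C, TStructureIsBounded C t₁ → TStructureIsBounded C t₂ →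
      (∀ X : C, heartP C t₁ X ↔ heartP C t₂ X) → t₁ = t₂) ∧
    (∀ 𝒜 : C → Prop, (∀ X Y : C, (X ≅ Y) → 𝒜 X → 𝒜 Y) → (∀ X : C, IsZero X → 𝒜 X) →
      ((∃ t : TStructure C, TStructureIsBounded C t ∧ ∀ X : C, heartP C t X ↔ 𝒜 X) ↔
        ((∀ (A B : C), 𝒜 A → 𝒜 B → ∀ k : ℤ, k < 0 → ∀ f : A ⟶ B⟦k⟧, f = 0) ∧
          (∀ E : C, ¬ IsZero E → HasHeartFiltration C 𝒜 E)))) := by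
  refine ⟨fun t₁ t₂ ht₁ ht₂ hh => ?_, fun 𝒜 hiso h𝒜0 => ⟨?_, ?_⟩⟩
  · have hh : heartP C t₁ = heartP C t₂ := funext fun X => propext (hh X)
    exact TStructure.ext_of_le_eq <| funext fun n =>
      le_antisymm (TStructure.le_le_of_heartP_eq ht₁ hh n)
        (TStructure.le_le_of_heartP_eq ht₂ hh.symm n)
  · rintro ⟨t, ht, hh⟩
    obtain rfl : heartP C t = 𝒜 := funext fun X => propext (hh X)
    refine ⟨noNegativeExt_heartP t, fun E hE => ?_⟩
    obtain ⟨-, n, hle, -⟩ := ht E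
    obtain ⟨a, hE'⟩ := exists_hasFiltration_heartP_of_le ht hle
    exact hE'.hasHeartFiltration hE
  · rintro ⟨h𝒜, h𝒜E⟩
    have : ObjectProperty.IsClosedUnderIsomorphisms 𝒜 := ⟨fun e => hiso _ _ e⟩
    have h𝒜E' (E : C) : ∃ a b, HasFiltration 𝒜 a b E := by
      by_cases hE : IsZero E
      · exact ⟨0, 0, .zero hE⟩
      · exact (h𝒜E E hE).exists_hasFiltration
    exact ⟨tStructureOfNoNegativeExt 𝒜 h𝒜 h𝒜E',
      tStructureIsBounded_tStructureOfNoNegativeExt h𝒜 h𝒜E',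
      heartP_tStructureOfNoNegativeExt_iff h𝒜 h𝒜E' h𝒜0⟩
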